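/- arXiv:2005.02967 — 4 statements merged into one kernel-verified Lean document; each statement's English description precedes it below -/
import Mathlib

section
/- Let H be a complex Hilbert space and let (a_t)_{t∈ℝ} and (b_t)_{t∈ℝ} be strongly continuous one-parameter groups of unitary operators on H. Assume that for every t ∈ ℝ and every bounded operator S on H one has a_t ∘ S ∘ b_t = b_{−t} ∘ S ∘ a_{−t}. Then a_t = b_{−t} for all t ∈ ℝ. -/
/-!
Put `u s = b s * a s`. The hypothesis together with the group laws gives `u s * S * u s = S`
for every operator `S`; taking `S = 1` shows `u s * u s = 1`, so `u s` commutes with every `S`.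
Then `b (2s) * a (2s) = b s * u s * a s = u s * u s = 1`, i.e. `a (2s) = b (-2s)`.
-/

section Monoid

variable {M : Type*} [Monoid M] {u : M}

theorem mul_self_eq_one_of_forall_mul_mul_eq_self (h : ∀ x, u * x * u = x) : u * u = 1 := by
  simpa using h 1

theorem commute_of_forall_mul_mul_eq_self (h : ∀ x, u * x * u = x) (x : M) : Commute u x :=
  calc u * x = u * x * (u * u) := by rw [mul_self_eq_one_of_forall_mul_mul_eq_self h, mul_one]
    _ = x * u := by rw [← mul_assoc, h]

end Monoid

section OneParameter

variable {G M : Type*} [AddGroup G] [Monoid M] {a b : G → M}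

theorem mul_map_neg_eq_one (ha_zero : a 0 = 1) (ha_add : ∀ s t, a (s + t) = a s * a t)
    (s : G) : a s * a (-s) = 1 := by
  rw [← ha_add, add_neg_cancel, ha_zero]

theorem mul_mul_mul_eq_self_of_conj_eq (ha_zero : a 0 = 1) (hb_zero : b 0 = 1)
    (ha_add : ∀ s t, a (s + t) = a s * a t) (hb_add : ∀ s t, b (s + t) = b s * b t)
    (hJ : ∀ t x, a t * (x * b t) = b (-t) * (x * a (-t))) (s : G) (x : M) :
    b s * a s * x * (b s * a s) = x := by
  have ha_inv : a (-s) * a s = 1 := by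
    simpa using mul_map_neg_eq_one ha_zero ha_add (-s)
  calc b s * a s * x * (b s * a s) = b s * (a s * (x * b s)) * a s := by
        simp only [mul_assoc]
    _ = (b s * b (-s)) * x * (a (-s) * a s) := by rw [hJ]; simp only [mul_assoc]
    _ = x := by rw [mul_map_neg_eq_one hb_zero hb_add, ha_inv, one_mul, mul_one]

theorem map_add_self_eq_map_neg_of_conj_eq (ha_zero : a 0 = 1) (hb_zero : b 0 = 1)
    (ha_add : ∀ s t, a (s + t) = a s * a t) (hb_add : ∀ s t, b (s + t) = b s * b t)
    (hJ : ∀ t x, a t * (x * b t) = b (-t) * (x * a (-t))) (s : G) :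
    a (s + s) = b (-(s + s)) := by
  have hu := mul_mul_mul_eq_self_of_conj_eq ha_zero hb_zero ha_add hb_add hJ s
  have hba : b (s + s) * a (s + s) = 1 :=
    calc b (s + s) * a (s + s) = b s * (b s * a s) * a s := by
          rw [ha_add, hb_add]; simp only [mul_assoc]
      _ = (b s * a s) * (b s * a s) := by
          rw [← (commute_of_forall_mul_mul_eq_self hu (b s)).eq]; simp only [mul_assoc]
      _ = 1 := mul_self_eq_one_of_forall_mul_mul_eq_self hu
  have hbb : b (-(s + s)) * b (s + s) = 1 := by
    simpa using mul_map_neg_eq_one hb_zero hb_add (-(s + s))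
  exact (left_inv_eq_right_inv hbb hba).symm

end OneParameter

theorem quantum_disk_stmt0_general
    {H : Type*} [NormedAddCommGroup H] [InnerProductSpace ℂ H]
    (a b : ℝ → (H →L[ℂ] H))
    (ha_zero : a 0 = 1) (hb_zero : b 0 = 1)
    (ha_add : ∀ s t, a (s + t) = a s ∘L a t)
    (hb_add : ∀ s t, b (s + t) = b s ∘L b t)
    (hJ : ∀ (t : ℝ) (S : H →L[ℂ] H), a t ∘L S ∘L b t = b (-t) ∘L S ∘L a (-t)) :
    ∀ t : ℝ, a t = b (-t) := by
  intro t
  simpa only [add_halves] using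
    map_add_self_eq_map_neg_of_conj_eq ha_zero hb_zero ha_add hb_add hJ (t / 2)

/-- If `(a_t)` and `(b_t)` are strongly continuous one-parameter groups of unitary operators
on a complex Hilbert space `H` such that `a_t ∘ S ∘ b_t = b_{-t} ∘ S ∘ a_{-t}` for every
bounded operator `S` and every `t ∈ ℝ`, then `a_t = b_{-t}` for all `t`. -/
theorem quantum_disk_stmt0
    {H : Type*} [NormedAddCommGroup H] [InnerProductSpace ℂ H] [CompleteSpace H]
    (a b : ℝ → (H →L[ℂ] H))
    (ha_unitary : ∀ t, a t ∈ unitary (H →L[ℂ] H))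
    (hb_unitary : ∀ t, b t ∈ unitary (H →L[ℂ] H))
    (ha_zero : a 0 = 1) (hb_zero : b 0 = 1)
    (ha_add : ∀ s t, a (s + t) = a s ∘L a t)
    (hb_add : ∀ s t, b (s + t) = b s ∘L b t)
    (ha_cont : ∀ ξ : H, Continuous fun t => a t ξ)
    (hb_cont : ∀ ξ : H, Continuous fun t => b t ξ)
    (hJ : ∀ (t : ℝ) (S : H →L[ℂ] H), a t ∘L S ∘L b t = b (-t) ∘L S ∘L a (-t)) :
    ∀ t : ℝ, a t = b (-t) :=
  quantum_disk_stmt0_general a b ha_zero hb_zero ha_add hb_add hJ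
end

section
/- Let H be a complex Hilbert space and let D be a compact, injective, positive (self-adjoint with nonnegative spectrum) bounded operator on H. For q > 0 write H_q = ker(D − q·1) for the eigenspace of D at q; each H_q with q an eigenvalue of D is finite-dimensional. Let B be a bounded positive operator on H commuting with D (so B preserves each H_q). Let ρ > 1 and let F be a bounded operator on H with finite-dimensional kernel such that F ∘ B = B ∘ F and F(H_q) ⊆ H_{ρq} for every q > 0. For each eigenvalue q of D let Δ_q denote the set of eigenvalues of the restriction of B to the finite-dimensional space H_q. Then the union ⋃_q Δ_q, taken over all eigenvalues q of D, is a finite set. -/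
/-!
Let `ξ ∈ H_q` be an eigenvector of `B` with eigenvalue `c`; positivity and injectivity of `D` give
`q > 0`. Since `F` commutes with `B` and shifts `H_q` into `H_{ρq}`, each `Fⁿ ξ` is again a
`c`-eigenvector of `B` (or zero) lying in `H_{ρⁿq}`. An eigenvalue of `D` is bounded by `‖D‖`, while
`ρⁿq → ∞`, so the orbit reaches `0`; its last nonzero vector is a `c`-eigenvector of `B` inside the
finite-dimensional, `B`-invariant space `ker F`. Hence every `c` is an eigenvalue of `B|ker F`.
-/

namespace Module.End

variable {K V : Type*} [Field K] [AddCommGroup V] [Module K V] {F B : Module.End K V}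

theorem mapsTo_ker_of_commute (h : Commute F B) :
    Set.MapsTo B (LinearMap.ker F) (LinearMap.ker F) := fun x hx => by
  rw [SetLike.mem_coe, LinearMap.mem_ker] at hx ⊢
  rw [← mul_apply, h.eq, mul_apply, hx, map_zero]

theorem apply_pow_apply_eq_smul_of_commute (h : Commute F B) {c : K} {x : V}
    (hx : B x = c • x) (n : ℕ) : B ((F ^ n) x) = c • (F ^ n) x := by
  rw [← mul_apply, ← (h.pow_left n).eq, mul_apply, hx, map_smul]

theorem hasEigenvalue_restrict_ker_of_pow_apply_eq_zero (h : Commute F B) {c : K} {x : V}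
    (hx : B.HasEigenvector c x) {n : ℕ} (hn : (F ^ n) x = 0) :
    HasEigenvalue (B.restrict (mapsTo_ker_of_commute h)) c := by
  classical
  have hex : ∃ k, (F ^ k) x = 0 := ⟨n, hn⟩
  have hfind : Nat.find hex ≠ 0 := fun h0 => hx.2 (by simpa [h0] using Nat.find_spec hex)
  obtain ⟨m, hm⟩ := Nat.exists_eq_add_one_of_ne_zero hfind
  have hker : (F ^ m) x ∈ LinearMap.ker F := by
    rw [LinearMap.mem_ker, ← mul_apply, ← pow_succ', ← hm]
    exact Nat.find_spec hex
  refine hasEigenvalue_of_hasEigenvector (x := ⟨_, hker⟩) ⟨?_, ?_⟩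
  · rw [mem_eigenspace_iff]
    ext
    exact apply_pow_apply_eq_smul_of_commute h hx.apply_eq_smul m
  · simpa [Subtype.ext_iff] using Nat.find_min hex (by omega : m < Nat.find hex)

theorem apply_pow_apply_eq_smul_of_forall_apply_eq_smul {𝕜 E : Type*} [RCLike 𝕜]
    [AddCommGroup E] [Module 𝕜 E] {D F : End 𝕜 E} {ρ : ℝ} (hρ : 0 < ρ)
    (hF : ∀ q : ℝ, 0 < q → ∀ x, D x = (q : 𝕜) • x → D (F x) = ((ρ * q : ℝ) : 𝕜) • F x)
    {q : ℝ} (hq : 0 < q) {x : E} (hx : D x = (q : 𝕜) • x) (n : ℕ) :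
    D ((F ^ n) x) = ((ρ ^ n * q : ℝ) : 𝕜) • (F ^ n) x := by
  induction n with
  | zero => simpa using hx
  | succ n ih =>
    rw [pow_succ', mul_apply, pow_succ', mul_assoc]
    exact hF _ (by positivity) _ ih

end Module.End

namespace ContinuousLinearMap

section Normed

variable {𝕜 E : Type*} [NontriviallyNormedField 𝕜] [NormedAddCommGroup E] [NormedSpace 𝕜 E]

theorem mem_ker_sub_smul_one_iff (D : E →L[𝕜] E) (c : 𝕜) (x : E) :
    x ∈ LinearMap.ker ((D - c • 1 : E →L[𝕜] E) : E →ₗ[𝕜] E) ↔ D x = c • x := by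
  simp [sub_eq_zero]

theorem eq_zero_of_apply_eq_smul_of_opNorm_lt {D : E →L[𝕜] E} {c : 𝕜} {x : E}
    (hx : D x = c • x) (hc : ‖D‖ < ‖c‖) : x = 0 := by
  by_contra hx0
  have hle : ‖c‖ * ‖x‖ ≤ ‖D‖ * ‖x‖ := by
    simpa only [hx, norm_smul] using D.le_opNorm x
  exact hc.not_ge (le_of_mul_le_mul_right hle (norm_pos_iff.mpr hx0))

end Normed

theorem IsPositive.pos_of_apply_eq_smul {𝕜 E : Type*} [RCLike 𝕜]
    [NormedAddCommGroup E] [InnerProductSpace 𝕜 E] {D : E →L[𝕜] E} (hD : D.IsPositive)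
    (hinj : Function.Injective D) {q : ℝ} {x : E} (hx0 : x ≠ 0) (hx : D x = (q : 𝕜) • x) :
    0 < q := by
  have hnonneg : 0 ≤ q * ‖x‖ ^ 2 := by
    simpa only [hx, inner_smul_real_left, RCLike.smul_re, inner_self_eq_norm_sq]
      using hD.re_inner_nonneg_left x
  have hq : q ≠ 0 := by
    rintro rfl
    exact hx0 (hinj (by simp [hx]))
  exact lt_of_le_of_ne (nonneg_of_mul_nonneg_left hnonneg (by positivity)) hq.symm

end ContinuousLinearMap

theorem quantum_disk_stmt2_general
    {H : Type*} [NormedAddCommGroup H] [InnerProductSpace ℂ H]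
    (D B F : H →L[ℂ] H)
    (hD_inj : Function.Injective ⇑D)
    (hD_pos : D.IsPositive)
    (ρ : ℝ) (hρ : 1 < ρ)
    (hF_ker : FiniteDimensional ℂ (LinearMap.ker (F : H →ₗ[ℂ] H)))
    (hFB : F ∘L B = B ∘L F)
    (hF_shift : ∀ q : ℝ, 0 < q →
      ∀ ξ ∈ LinearMap.ker (((D - (q : ℂ) • (1 : H →L[ℂ] H) : H →L[ℂ] H) : H →ₗ[ℂ] H)),
        F ξ ∈ LinearMap.ker (((D - ((ρ * q : ℝ) : ℂ) • (1 : H →L[ℂ] H) : H →L[ℂ] H) : H →ₗ[ℂ] H))) :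
    Set.Finite
      (⋃ q ∈ {q : ℝ | LinearMap.ker (((D - (q : ℂ) • (1 : H →L[ℂ] H) : H →L[ℂ] H) : H →ₗ[ℂ] H)) ≠ ⊥},
        {c : ℝ | ∃ ξ ∈ LinearMap.ker (((D - (q : ℂ) • (1 : H →L[ℂ] H) : H →L[ℂ] H) : H →ₗ[ℂ] H)),
          ξ ≠ 0 ∧ B ξ = (c : ℂ) • ξ}) := by
  have hcomm : Commute (F : Module.End ℂ H) B := congrArg ContinuousLinearMap.toLinearMap hFB
  have hshift : ∀ q : ℝ, 0 < q → ∀ x, D x = (q : ℂ) • x → D (F x) = ((ρ * q : ℝ) : ℂ) • F x :=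
    fun q hq x hx => (D.mem_ker_sub_smul_one_iff _ _).1
      (hF_shift q hq x ((D.mem_ker_sub_smul_one_iff _ _).2 hx))
  refine ((Module.End.finite_hasEigenvalue (B.toLinearMap.restrict
    (Module.End.mapsTo_ker_of_commute hcomm))).preimage Complex.ofReal_injective.injOn).subset ?_
  simp only [Set.iUnion_subset_iff]
  rintro q - c ⟨ξ, hξ, hξ0, hBξ⟩
  rw [D.mem_ker_sub_smul_one_iff] at hξ
  have hq : 0 < q := hD_pos.pos_of_apply_eq_smul hD_inj hξ0 hξ
  have hiter := Module.End.apply_pow_apply_eq_smul_of_forall_apply_eq_smul (D := (D : H →ₗ[ℂ] H))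
    (by positivity) hshift hq hξ
  obtain ⟨n, hn⟩ := pow_unbounded_of_one_lt (‖D‖ / q) hρ
  have hFn : ((F : Module.End ℂ H) ^ n) ξ = 0 := by
    refine D.eq_zero_of_apply_eq_smul_of_opNorm_lt (hiter n) ?_
    rw [RCLike.norm_ofReal, abs_of_pos (by positivity)]
    exact (div_lt_iff₀ hq).1 hn
  exact Module.End.hasEigenvalue_restrict_ker_of_pow_apply_eq_zero hcomm
    ⟨Module.End.mem_eigenspace_iff.2 hBξ, hξ0⟩ hFn

/-- Let `D` be a compact, injective, positive bounded operator on a complex Hilbert space `H`,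
with eigenspaces `H_q = ker (D - q·1)`.  Let `B` be a bounded positive operator commuting
with `D`, let `ρ > 1`, and let `F` be a bounded operator with finite-dimensional kernel,
commuting with `B` and satisfying `F (H_q) ⊆ H_{ρ q}` for all `q > 0`.  Then the union over
all eigenvalues `q` of `D` of the sets `Δ_q` of eigenvalues of the restriction of `B` to
`H_q` is a finite set. -/
theorem quantum_disk_stmt2
    {H : Type*} [NormedAddCommGroup H] [InnerProductSpace ℂ H] [CompleteSpace H]
    (D B F : H →L[ℂ] H)
    (hD_compact : IsCompactOperator ⇑D)
    (hD_inj : Function.Injective ⇑D)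
    (hD_pos : D.IsPositive)
    (hB_pos : B.IsPositive)
    (hBD : B ∘L D = D ∘L B)
    (ρ : ℝ) (hρ : 1 < ρ)
    (hF_ker : FiniteDimensional ℂ (LinearMap.ker (F : H →ₗ[ℂ] H)))
    (hFB : F ∘L B = B ∘L F)
    (hF_shift : ∀ q : ℝ, 0 < q →
      ∀ ξ ∈ LinearMap.ker (((D - (q : ℂ) • (1 : H →L[ℂ] H) : H →L[ℂ] H) : H →ₗ[ℂ] H)),
        F ξ ∈ LinearMap.ker (((D - ((ρ * q : ℝ) : ℂ) • (1 : H →L[ℂ] H) : H →L[ℂ] H) : H →ₗ[ℂ] H))) :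
    Set.Finite
      (⋃ q ∈ {q : ℝ | LinearMap.ker (((D - (q : ℂ) • (1 : H →L[ℂ] H) : H →L[ℂ] H) : H →ₗ[ℂ] H)) ≠ ⊥},
        {c : ℝ | ∃ ξ ∈ LinearMap.ker (((D - (q : ℂ) • (1 : H →L[ℂ] H) : H →L[ℂ] H) : H →ₗ[ℂ] H)),
          ξ ≠ 0 ∧ B ξ = (c : ℂ) • ξ}) :=
  quantum_disk_stmt2_general D B F hD_inj hD_pos ρ hρ hF_ker hFB hF_shift
end

section
/- Every compact operator on ℓ²(ℕ) belongs to the Toeplitz algebra T, i.e. to the smallest C*-subalgebra of B(ℓ²(ℕ)) containing the unilateral shift s. -/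
/-!
`1 - s s*` is the rank-one projection onto `e₀`, so every matrix unit
`e_i ⊗ e_j* = s^i (1 - s s*) s*^j` lies in the C*-algebra generated by `s`. Since `(x, y) ↦ x ⊗ y*`
is continuous and the basis spans a dense subspace, so does every rank-one operator. A compact
operator `A` is the norm limit of its truncations `P_F A = ∑_{i ∈ F} e_i ⊗ (A* e_i)`: the
projections `P_F` have norm at most one and converge strongly to the identity, hence uniformly on
the relatively compact set `A (closedBall 0 1)`.
-/

open Filter Topology Set InnerProductSpace ContinuousLinearMap

section UniformConvergence

variable {ι 𝕜 E F : Type*} [NontriviallyNormedField 𝕜]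
  [NormedAddCommGroup E] [NormedSpace 𝕜 E] [NormedAddCommGroup F] [NormedSpace 𝕜 F]
  {l : Filter ι} {T : ι → E →L[𝕜] F} {T₀ : E →L[𝕜] F} {C : ℝ}

theorem ContinuousLinearMap.tendstoUniformlyOn_of_tendsto_of_norm_le
    (hC : ∀ i, ‖T i‖ ≤ C) (hT : ∀ x, Tendsto (fun i ↦ T i x) l (𝓝 (T₀ x)))
    {K : Set E} (hK : IsCompact K) : TendstoUniformlyOn (fun i ↦ ⇑(T i)) T₀ l K := by
  have hequi : Equicontinuous (fun i ↦ ⇑(T i)) :=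
    ((NormedSpace.equicontinuous_TFAE T).out 5 1 :).mp ⟨C, hC⟩
  have hcover : ⋃₀ {K : Set E | IsCompact K} = univ :=
    eq_univ_of_forall fun x ↦ mem_sUnion_of_mem (mem_singleton x) isCompact_singleton
  -- Ascoli: for an equicontinuous family, pointwise convergence is uniform on compact sets.
  have hcompactOpen := (EquicontinuousOn.tendsto_uniformOnFun_iff_pi (fun _ hK ↦ hK) hcover
    (fun K _ ↦ hequi.equicontinuousOn K) l T₀).mpr (tendsto_pi_nhds.mpr hT)
  exact UniformOnFun.tendsto_iff_tendstoUniformlyOn.mp hcompactOpen K hK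

theorem IsCompactOperator.tendsto_comp_of_tendsto_of_norm_le [NormedAlgebra ℝ 𝕜]
    {G : Type*} [NormedAddCommGroup G] [NormedSpace 𝕜 G] {A : G →L[𝕜] E}
    (hA : IsCompactOperator A) (hC : ∀ i, ‖T i‖ ≤ C)
    (hT : ∀ x, Tendsto (fun i ↦ T i x) l (𝓝 (T₀ x))) :
    Tendsto (fun i ↦ T i ∘L A) l (𝓝 (T₀ ∘L A)) := by
  have hunif := tendstoUniformlyOn_of_tendsto_of_norm_le hC hT
    (hA.isCompact_closure_image_closedBall 1)
  rw [Metric.tendsto_nhds]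
  intro ε hε
  filter_upwards [Metric.tendstoUniformlyOn_iff.mp hunif (ε / 2) (half_pos hε)] with i hi
  rw [dist_eq_norm]
  refine lt_of_le_of_lt (opNorm_le_of_unit_norm (half_pos hε).le fun x hx ↦ ?_) (half_lt_self hε)
  have hAx : A x ∈ closure (A '' Metric.closedBall 0 1) :=
    subset_closure ⟨x, by simp [hx], rfl⟩
  simpa [dist_eq_norm, norm_sub_rev] using (hi _ hAx).le

end UniformConvergence

variable {ι κ 𝕜 E F : Type*} [RCLike 𝕜]
  [NormedAddCommGroup E] [InnerProductSpace 𝕜 E] [NormedAddCommGroup F] [InnerProductSpace 𝕜 F]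

theorem Orthonormal.norm_sum_rankOne_self_le {v : ι → E} (hv : Orthonormal 𝕜 v)
    (s : Finset ι) : ‖∑ i ∈ s, rankOne 𝕜 (v i) (v i)‖ ≤ 1 := by
  refine opNorm_le_bound _ zero_le_one fun x ↦ ?_
  have hsq : ‖∑ i ∈ s, inner 𝕜 (v i) x • v i‖ ^ 2 = ∑ i ∈ s, ‖inner 𝕜 (v i) x‖ ^ 2 := by
    rw [@norm_sq_eq_re_inner 𝕜, hv.inner_sum, map_sum]
    refine Finset.sum_congr rfl fun i _ ↦ ?_
    rw [RCLike.conj_mul, ← RCLike.ofReal_pow, RCLike.ofReal_re]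
  rw [one_mul, ← sq_le_sq₀ (norm_nonneg _) (norm_nonneg _)]
  simpa [hsq] using hv.sum_inner_products_le x

namespace HilbertBasis

theorem ext_elem (b : HilbertBasis ι 𝕜 E) {x y : E}
    (h : ∀ i, inner 𝕜 (b i) x = inner 𝕜 (b i) y) : x = y :=
  b.repr.injective <| lp.ext <| funext fun i ↦ by simp only [b.repr_apply_apply, h]

theorem ext_continuousLinearMap {G : Type*} [NormedAddCommGroup G] [NormedSpace 𝕜 G]
    (b : HilbertBasis ι 𝕜 E) {f g : E →L[𝕜] G} (h : ∀ i, f (b i) = g (b i)) : f = g :=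
  ContinuousLinearMap.ext_on (Submodule.dense_iff_topologicalClosure_eq_top.mpr b.dense_span)
    (forall_mem_range.mpr h)

theorem eq_top_of_isClosed (b : HilbertBasis ι 𝕜 E) {p : Submodule 𝕜 E}
    (hp : IsClosed (p : Set E)) (h : ∀ i, b i ∈ p) : p = ⊤ :=
  eq_top_iff.mpr <| b.dense_span.ge.trans <|
    Submodule.topologicalClosure_minimal _ (Submodule.span_le.mpr (range_subset_iff.mpr h)) hp

theorem rankOne_mem_of_isClosed (bE : HilbertBasis ι 𝕜 E) (bF : HilbertBasis κ 𝕜 F)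
    {S : Submodule 𝕜 (F →L[𝕜] E)} (hS : IsClosed (S : Set (F →L[𝕜] E)))
    (h : ∀ i j, rankOne 𝕜 (bE i) (bF j) ∈ S) (x : E) (y : F) : rankOne 𝕜 x y ∈ S := by
  have hleft : ∀ j, rankOne 𝕜 x (bF j) ∈ S := fun j ↦ by
    let f : E →L[𝕜] F →L[𝕜] E := (rankOne 𝕜).flip (bF j)
    have := bE.eq_top_of_isClosed (p := S.comap f.toLinearMap) (hS.preimage f.continuous) (h · j)
    exact this.ge Submodule.mem_top
  let g : F →L⋆[𝕜] F →L[𝕜] E := rankOne 𝕜 x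
  have := bF.eq_top_of_isClosed (p := S.comap g.toLinearMap) (hS.preimage g.continuous) hleft
  exact this.ge Submodule.mem_top

theorem shift_pow_apply (b : HilbertBasis ℕ 𝕜 E) {s : E →L[𝕜] E}
    (hs : ∀ n, s (b n) = b (n + 1)) (i n : ℕ) : (s ^ i) (b n) = b (n + i) := by
  induction i generalizing n with
  | zero => rfl
  | succ i ih => rw [pow_succ', mul_def, comp_apply, ih, hs, add_assoc]

variable [CompleteSpace E] [CompleteSpace F]

theorem tendsto_sum_rankOne_adjoint (b : HilbertBasis ι 𝕜 E) {A : F →L[𝕜] E}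
    (hA : IsCompactOperator A) :
    Tendsto (fun s : Finset ι ↦ ∑ i ∈ s, rankOne 𝕜 (b i) (adjoint A (b i))) atTop (𝓝 A) := by
  have hproj : ∀ x, Tendsto (fun s : Finset ι ↦ (∑ i ∈ s, rankOne 𝕜 (b i) (b i)) x) atTop
      (𝓝 (ContinuousLinearMap.id 𝕜 E x)) := fun x ↦ by
    simp only [sum_apply, rankOne_apply, id_apply, ← b.repr_apply_apply]
    exact b.hasSum_repr x
  simpa [finsetSum_comp, rankOne_comp] using
    hA.tendsto_comp_of_tendsto_of_norm_le b.orthonormal.norm_sum_rankOne_self_le hproj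

theorem mem_of_isCompactOperator (bE : HilbertBasis ι 𝕜 E) (bF : HilbertBasis κ 𝕜 F)
    {S : Submodule 𝕜 (F →L[𝕜] E)} (hS : IsClosed (S : Set (F →L[𝕜] E)))
    (h : ∀ i j, rankOne 𝕜 (bE i) (bF j) ∈ S) {A : F →L[𝕜] E} (hA : IsCompactOperator A) :
    A ∈ S :=
  hS.mem_of_tendsto (bE.tendsto_sum_rankOne_adjoint hA) <| .of_forall fun _ ↦
    sum_mem fun _ _ ↦ rankOne_mem_of_isClosed bE bF hS h _ _

section Shift

variable (b : HilbertBasis ℕ 𝕜 E) {s : E →L[𝕜] E}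

theorem adjoint_shift_apply_zero (hs : ∀ n, s (b n) = b (n + 1)) : adjoint s (b 0) = 0 :=
  b.ext_elem fun k ↦ by simp [adjoint_inner_right, hs, orthonormal_iff_ite.mp b.orthonormal]

theorem adjoint_shift_apply_succ (hs : ∀ n, s (b n) = b (n + 1)) (n : ℕ) :
    adjoint s (b (n + 1)) = b n :=
  b.ext_elem fun k ↦ by simp [adjoint_inner_right, hs, orthonormal_iff_ite.mp b.orthonormal]

theorem one_sub_shift_mul_star (hs : ∀ n, s (b n) = b (n + 1)) :
    1 - s * star s = rankOne 𝕜 (b 0) (b 0) := by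
  refine b.ext_continuousLinearMap fun n ↦ ?_
  rcases n with _ | n
  · simp [star_eq_adjoint, b.adjoint_shift_apply_zero hs, b.orthonormal.norm_eq_one]
  · simp [star_eq_adjoint, b.adjoint_shift_apply_succ hs, hs, orthonormal_iff_ite.mp b.orthonormal]

theorem rankOne_eq_shift_pow_mul_mul_star_pow (hs : ∀ n, s (b n) = b (n + 1)) (i j : ℕ) :
    rankOne 𝕜 (b i) (b j) = s ^ i * (1 - s * star s) * star s ^ j := by
  rw [b.one_sub_shift_mul_star hs, mul_def, mul_def, comp_rankOne, rankOne_comp, ← star_eq_adjoint,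
    star_pow, star_star, b.shift_pow_apply hs, b.shift_pow_apply hs, zero_add, zero_add]

theorem mem_elemental_of_isCompactOperator (hs : ∀ n, s (b n) = b (n + 1)) {A : E →L[𝕜] E}
    (hA : IsCompactOperator A) : A ∈ StarAlgebra.elemental 𝕜 s := by
  have hs_mem := StarAlgebra.elemental.self_mem 𝕜 s
  refine b.mem_of_isCompactOperator b (S := (StarAlgebra.elemental 𝕜 s).toSubalgebra.toSubmodule)
    (StarAlgebra.elemental.isClosed 𝕜 s) (fun i j ↦ ?_) hA
  show rankOne 𝕜 (b i) (b j) ∈ StarAlgebra.elemental 𝕜 s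
  rw [b.rankOne_eq_shift_pow_mul_mul_star_pow hs]
  exact mul_mem (mul_mem (pow_mem hs_mem i)
    (sub_mem (one_mem _) (mul_mem hs_mem (star_mem hs_mem)))) (pow_mem (star_mem hs_mem) j)

end Shift

end HilbertBasis

/-- Every compact operator on `ℓ²(ℕ)` belongs to the Toeplitz algebra, i.e. to the smallest
C*-subalgebra of `B(ℓ²(ℕ))` containing the unilateral shift `s`. -/
theorem quantum_disk_stmt8
    (s : lp (fun _ : ℕ => ℂ) 2 →L[ℂ] lp (fun _ : ℕ => ℂ) 2)
    (hs : ∀ n : ℕ, s (lp.single 2 n 1) = lp.single 2 (n + 1) 1)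
    (A : lp (fun _ : ℕ => ℂ) 2 →L[ℂ] lp (fun _ : ℕ => ℂ) 2)
    (hA : IsCompactOperator ⇑A) :
    A ∈ StarAlgebra.elemental ℂ s := by
  let b : HilbertBasis ℕ ℂ (lp (fun _ : ℕ => ℂ) 2) := .ofRepr (.refl ℂ _)
  have hb : ∀ n, b n = lp.single 2 n 1 := fun n ↦ (b.repr_symm_single n).symm
  exact b.mem_elemental_of_isCompactOperator (by simpa only [hb] using hs) hA
end

section
/- Let T be the Toeplitz algebra, the smallest C*-subalgebra of B(ℓ²(ℕ)) containing the unilateral shift s, and let σ : T → C(𝕋, ℂ) be the symbol map, i.e. the unique unital *-homomorphism with σ(s)(z) = z whose kernel is the set of compact operators in T. If A ∈ T and σ(A) is invertible in C(𝕋, ℂ) (in particular, if σ(A) is a unitary element), then A is a Fredholm operator: the kernel of A is finite-dimensional and the range of A is closed and of finite codimension in ℓ²(ℕ). -/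
/-!
Lift the inverse of `σ A` back into `T`: the functional calculus commutes with `*`-homomorphisms,
so applying to `A* A` a continuous function equal to `t ↦ t⁻¹` on the spectrum of `σ (A* A)`
yields `B` with `σ (B A) = 1`, and likewise `B'` with `σ (B' A*) = 1`. Hence `B A - 1` and
`B' A* - 1` are compact. An operator with a left inverse modulo the compacts has a
finite-dimensional kernel (on it `B A - 1` acts as `-1`) and a closed range (it is bounded below on
the orthogonal complement of its kernel, by a compactness argument). Applied to `A*`, this makes
`(range A)ᗮ = ker A*` finite-dimensional.
-/

open Filter Topology
open scoped InnerProduct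

section SpectralOrder

attribute [local instance] CStarAlgebra.spectralOrder CStarAlgebra.spectralOrderedRing

theorem StarAlgHom.exists_map_mul_eq_one_of_isUnit {A B : Type*} [CStarAlgebra A] [CStarAlgebra B]
    (φ : A →⋆ₐ[ℂ] B) {a : A} (ha : IsUnit (φ a)) : ∃ b, φ b * φ a = 1 := by
  nontriviality B
  set x := star a * a
  have hx : IsStrictlyPositive (φ x) := by
    rw [map_mul, map_star]
    exact (ha.star.mul ha).isStrictlyPositive (star_mul_self_nonneg _)
  obtain ⟨r, hr, hr_le⟩ := (CFC.exists_pos_algebraMap_le_iff (a := φ x)).mpr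
    fun t ht => hx.spectrum_pos ht
  rw [algebraMap_le_iff_le_spectrum] at hr_le
  set f : ℝ → ℝ := fun t => (max t r)⁻¹
  have hf : Continuous f :=
    (continuous_id.max continuous_const).inv₀ fun t => (hr.trans_le (le_max_right t r)).ne'
  -- `f` is continuous on all of `ℝ`, so it commutes with `φ` although `0` may lie in the
  -- spectrum of `x`; on the spectrum of `φ x` it is `t ↦ t⁻¹`.
  refine ⟨cfc f x * star a, ?_⟩
  calc φ (cfc f x * star a) * φ a = cfc f (φ x) * φ x := by
        rw [map_mul, StarAlgHom.map_cfc φ f x hf.continuousOn, mul_assoc, ← map_mul]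
    _ = cfc (fun t => f t * t) (φ x) := by
        rw [cfc_mul f (fun t => t) (φ x) hf.continuousOn, cfc_id' ℝ (φ x)]
    _ = 1 := by
        rw [← cfc_one ℝ (φ x)]
        refine cfc_congr fun t ht => ?_
        simp only [f, max_eq_left (hr_le t ht)]
        exact inv_mul_cancel₀ (hr.trans_le (hr_le t ht)).ne'

end SpectralOrder

section LeftInverseModuloCompact

variable {𝕜 E F : Type*} [RCLike 𝕜] [NormedAddCommGroup E] [NormedSpace 𝕜 E]
  [NormedAddCommGroup F] [NormedSpace 𝕜 F] {T : E →L[𝕜] F} {S : F →L[𝕜] E}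

theorem exists_tendsto_subseq_of_isCompactOperator_comp_sub_id
    (hK : IsCompactOperator (S ∘L T - ContinuousLinearMap.id 𝕜 E)) {x : ℕ → E}
    (hx : ∀ n, ‖x n‖ ≤ 1) (hTx : Tendsto (fun n => T (x n)) atTop (𝓝 0)) :
    ∃ y, ∃ ψ : ℕ → ℕ, StrictMono ψ ∧ Tendsto (x ∘ ψ) atTop (𝓝 y) := by
  obtain ⟨C, hC, hKC⟩ := hK.image_closedBall_subset_compact 1
  obtain ⟨z, -, ψ, hψ, hz⟩ :=
    hC.tendsto_subseq (x := fun n => (S ∘L T - ContinuousLinearMap.id 𝕜 E) (x n))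
      fun n => hKC ⟨x n, by simpa using hx n, rfl⟩
  have hSTx := ((S.continuous.tendsto 0).comp hTx).comp hψ.tendsto_atTop
  exact ⟨-z, ψ, hψ, by simpa [Function.comp_def] using hSTx.sub hz⟩

theorem exists_antilipschitzWith_comp_subtypeL_of_isCompactOperator_comp_sub_id
    (hK : IsCompactOperator (S ∘L T - ContinuousLinearMap.id 𝕜 E)) {M : Submodule 𝕜 E}
    (hM : IsClosed (M : Set E)) (hMT : Disjoint M T.ker) :
    ∃ C, AntilipschitzWith C (T ∘L M.subtypeL) := by
  by_contra h
  have hsmall (n : ℕ) : ∃ x : M, ‖x‖ = 1 ∧ (n + 1) * ‖T x‖ < 1 := by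
    by_contra! hn
    exact h ⟨⟨n + 1, by positivity⟩, antilipschitz_of_bound_of_norm_one (𝕜 := 𝕜) _ hn⟩
  choose x hx1 hTx using hsmall
  have hTx0 : Tendsto (fun n => T (x n)) atTop (𝓝 0) := by
    refine squeeze_zero_norm (fun n => ?_) tendsto_one_div_add_atTop_nhds_zero_nat
    rw [le_div_iff₀' (by positivity)]
    exact (hTx n).le
  obtain ⟨y, ψ, hψ, hy⟩ := exists_tendsto_subseq_of_isCompactOperator_comp_sub_id hK
    (x := fun n => (x n : E)) (fun n => (hx1 n).le) hTx0
  have hyM : y ∈ M := hM.mem_of_tendsto hy (Eventually.of_forall fun n => (x (ψ n)).2)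
  have hy1 : ‖y‖ = 1 :=
    tendsto_nhds_unique hy.norm (tendsto_const_nhds.congr fun n => (hx1 (ψ n)).symm)
  have hTy : T y = 0 :=
    tendsto_nhds_unique ((T.continuous.tendsto y).comp hy) (hTx0.comp hψ.tendsto_atTop)
  simp [Submodule.disjoint_def.mp hMT y hyM hTy] at hy1

end LeftInverseModuloCompact

section Hilbert

variable {𝕜 E F : Type*} [RCLike 𝕜] [NormedAddCommGroup E] [InnerProductSpace 𝕜 E]
  [CompleteSpace E]

theorem finiteDimensional_ker_of_isCompactOperator_comp_sub_id [NormedAddCommGroup F]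
    [NormedSpace 𝕜 F] {T : E →L[𝕜] F} {S : F →L[𝕜] E}
    (hK : IsCompactOperator (S ∘L T - ContinuousLinearMap.id 𝕜 E)) :
    FiniteDimensional 𝕜 T.ker := by
  have hker :
      T.ker ≤ Module.End.eigenspace (S ∘L T - ContinuousLinearMap.id 𝕜 E).toLinearMap (-1) := by
    intro x hx
    simp_all
  have := ContinuousLinearMap.finite_dimensional_eigenspace hK (-1) (by norm_num)
  exact Submodule.finiteDimensional_of_le hker

theorem isClosed_range_of_isCompactOperator_comp_sub_id [NormedAddCommGroup F]
    [NormedSpace 𝕜 F] {T : E →L[𝕜] F} {S : F →L[𝕜] E}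
    (hK : IsCompactOperator (S ∘L T - ContinuousLinearMap.id 𝕜 E)) :
    IsClosed (Set.range T) := by
  set M := T.kerᗮ
  obtain ⟨C, hC⟩ := exists_antilipschitzWith_comp_subtypeL_of_isCompactOperator_comp_sub_id hK
    T.ker.isClosed_orthogonal T.ker.orthogonal_disjoint.symm
  have : CompleteSpace T.ker := T.isClosed_ker.completeSpace_coe
  have hrange : Set.range T = Set.range (T ∘L M.subtypeL) := by
    refine (Set.range_comp_subset_range _ _).antisymm' ?_
    rintro _ ⟨v, rfl⟩
    obtain ⟨a, ha, b, hb, rfl⟩ := T.ker.exists_add_mem_mem_orthogonal v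
    have hTa : T a = 0 := ha
    exact ⟨⟨b, hb⟩, by simp [hTa]⟩
  have : CompleteSpace M := T.ker.isClosed_orthogonal.completeSpace_coe
  exact hrange ▸ hC.isClosed_range (T ∘L M.subtypeL).uniformContinuous

theorem finiteDimensional_quotient_range_of_isClosed [NormedAddCommGroup F]
    [InnerProductSpace 𝕜 F] [CompleteSpace F] {T : E →L[𝕜] F} (hT : IsClosed (Set.range T))
    [FiniteDimensional 𝕜 (T†).ker] :
    FiniteDimensional 𝕜 (F ⧸ T.range) := by
  have : CompleteSpace T.range :=
    ((LinearMap.coe_range (T : E →ₗ[𝕜] F)).symm ▸ hT).completeSpace_coe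
  have : FiniteDimensional 𝕜 T.rangeᗮ := T.orthogonal_range ▸ inferInstance
  exact Module.Finite.equiv (T.range.quotientEquivOfIsCompl _ T.range.isCompl_orthogonal).symm

end Hilbert

instance : CompactSpace {z : ℂ // ‖z‖ = 1} := by
  have : IsCompact {z : ℂ | ‖z‖ = 1} := by
    convert isCompact_sphere (0 : ℂ) 1 using 1
    ext; simp
  exact isCompact_iff_compactSpace.mp this

set_option synthInstance.maxHeartbeats 100000 in
theorem quantum_disk_stmt12_general
    (s : lp (fun _ : ℕ => ℂ) 2 →L[ℂ] lp (fun _ : ℕ => ℂ) 2)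
    (σ : StarAlgebra.elemental ℂ s →⋆ₐ[ℂ] C({z : ℂ // ‖z‖ = 1}, ℂ))
    (hσker : ∀ A : StarAlgebra.elemental ℂ s,
      σ A = 0 ↔
        IsCompactOperator
          ⇑(A : lp (fun _ : ℕ => ℂ) 2 →L[ℂ] lp (fun _ : ℕ => ℂ) 2))
    (A : StarAlgebra.elemental ℂ s)
    (hA : IsUnit (σ A)) :
    FiniteDimensional ℂ
        (LinearMap.ker ((A : lp (fun _ : ℕ => ℂ) 2 →L[ℂ] lp (fun _ : ℕ => ℂ) 2) :
          lp (fun _ : ℕ => ℂ) 2 →ₗ[ℂ] lp (fun _ : ℕ => ℂ) 2)) ∧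
    IsClosed (Set.range ⇑(A : lp (fun _ : ℕ => ℂ) 2 →L[ℂ] lp (fun _ : ℕ => ℂ) 2)) ∧
    FiniteDimensional ℂ
      (lp (fun _ : ℕ => ℂ) 2 ⧸
        LinearMap.range ((A : lp (fun _ : ℕ => ℂ) 2 →L[ℂ] lp (fun _ : ℕ => ℂ) 2) :
          lp (fun _ : ℕ => ℂ) 2 →ₗ[ℂ] lp (fun _ : ℕ => ℂ) 2)) := by
  obtain ⟨B, hB⟩ :=
    StarAlgHom.exists_map_mul_eq_one_of_isUnit (A := StarAlgebra.elemental ℂ s) σ hA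
  obtain ⟨B', hB'⟩ := StarAlgHom.exists_map_mul_eq_one_of_isUnit (A := StarAlgebra.elemental ℂ s) σ
    (a := star A) (by rw [map_star]; exact hA.star)
  have hK := (hσker (B * A - 1)).mp (by rw [map_sub, map_mul, hB, map_one, sub_self])
  have hK' := (hσker (B' * star A - 1)).mp (by rw [map_sub, map_mul, hB', map_one, sub_self])
  have hrange := isClosed_range_of_isCompactOperator_comp_sub_id (T := A.1) (S := B.1) hK
  have := finiteDimensional_ker_of_isCompactOperator_comp_sub_id (T := A.1†) (S := B'.1) hK'
  exact ⟨finiteDimensional_ker_of_isCompactOperator_comp_sub_id (S := B.1) hK, hrange,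
    finiteDimensional_quotient_range_of_isClosed hrange⟩

/-- Let `T` be the Toeplitz algebra and `σ : T → C(𝕋, ℂ)` the symbol map, i.e. the unital
`*`-homomorphism sending the unilateral shift `s` to `z ↦ z`, whose kernel is the set of
compact operators in `T`.  If `A ∈ T` and `σ(A)` is invertible in `C(𝕋, ℂ)`, then `A` is a
Fredholm operator: its kernel is finite-dimensional and its range is closed and of finite
codimension in `ℓ²(ℕ)`. -/
theorem quantum_disk_stmt12
    (s : lp (fun _ : ℕ => ℂ) 2 →L[ℂ] lp (fun _ : ℕ => ℂ) 2)
    (hs : ∀ n : ℕ, s (lp.single 2 n 1) = lp.single 2 (n + 1) 1)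
    (σ : StarAlgebra.elemental ℂ s →⋆ₐ[ℂ] C({z : ℂ // ‖z‖ = 1}, ℂ))
    (hσs : σ ⟨s, StarAlgebra.elemental.self_mem ℂ s⟩ =
      ContinuousMap.mk Subtype.val continuous_subtype_val)
    (hσker : ∀ A : StarAlgebra.elemental ℂ s,
      σ A = 0 ↔
        IsCompactOperator
          ⇑(A : lp (fun _ : ℕ => ℂ) 2 →L[ℂ] lp (fun _ : ℕ => ℂ) 2))
    (A : StarAlgebra.elemental ℂ s)
    (hA : IsUnit (σ A)) :
    FiniteDimensional ℂ
        (LinearMap.ker ((A : lp (fun _ : ℕ => ℂ) 2 →L[ℂ] lp (fun _ : ℕ => ℂ) 2) :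
          lp (fun _ : ℕ => ℂ) 2 →ₗ[ℂ] lp (fun _ : ℕ => ℂ) 2)) ∧
    IsClosed (Set.range ⇑(A : lp (fun _ : ℕ => ℂ) 2 →L[ℂ] lp (fun _ : ℕ => ℂ) 2)) ∧
    FiniteDimensional ℂ
      (lp (fun _ : ℕ => ℂ) 2 ⧸
        LinearMap.range ((A : lp (fun _ : ℕ => ℂ) 2 →L[ℂ] lp (fun _ : ℕ => ℂ) 2) :
          lp (fun _ : ℕ => ℂ) 2 →ₗ[ℂ] lp (fun _ : ℕ => ℂ) 2)) :=
  quantum_disk_stmt12_general s σ hσker A hA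
end
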